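/- Let Ω be either ℝ³ or the half-space ℝ³₊={x∈ℝ³ : x₃>0}, let λ>1 and φ∈ℝ, and let f∈L³_w(Ω;ℝ³) be RDSS with factor λ and phase φ, i.e. f(x)=λ R(−φ) f(λ R(φ) x) for a.e. x∈Ω. Let x₀∈ℝ³, C₀>0, and let g:Ω→ℝ be measurable with |g(y)| ≤ C₀ (1+|x₀−y|)^{−3} for a.e. y∈Ω. Then ∫_Ω |g(y)| |f(y)| dy < ∞. -/

import Mathlib

open MeasureTheory Set
open scoped ENNReal

noncomputable section

/-- ℝ³ realized as functions `Fin 3 → ℝ`. -/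
abbrev V3 := Fin 3 → ℝ

/-- Rotation by angle `s` about the x₃-axis. -/
def rot (s : ℝ) : Matrix (Fin 3) (Fin 3) ℝ :=
  !![Real.cos s, -Real.sin s, 0; Real.sin s, Real.cos s, 0; 0, 0, 1]

/-- Squared Euclidean norm on ℝ³. -/
def nsq (x : V3) : ℝ := ∑ i, (x i) ^ 2

/-- Euclidean norm on ℝ³. -/
def en (x : V3) : ℝ := Real.sqrt (nsq x)

/-- The open half space ℝ³₊. -/
def halfSpace : Set V3 := {x : V3 | 0 < x 2}

/-!
Weak `L³` embeds in `L² + L⁴`: by the layer-cake formula, `|f|` is in `L²` on `{|f| > 1}` and in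
`L⁴` on `{|f| ≤ 1}`. The kernel `(1 + |x₀ - y|)⁻³` lies in `L² ∩ L^{4/3}`, because
`(1 + |y|)^{-r}` is integrable on `ℝ³` for `r > 3`. Young's inequality `ab ≤ a² + b²` on the first
set and `ab ≤ a^{4/3} + b⁴` on the second then bounds the pairing.
-/

lemma mul_le_rpow_add_rpow {x y r r' : ℝ} (hx : 0 ≤ x) (hy : 0 ≤ y)
    (hr : r.HolderConjugate r') : x * y ≤ x ^ r' + y ^ r :=
  calc x * y ≤ x ^ r' / r' + y ^ r / r := Real.young_inequality_of_nonneg hx hy hr.symm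
    _ ≤ x ^ r' + y ^ r := by
      gcongr
      · exact div_le_self (by positivity) hr.symm.lt.le
      · exact div_le_self (by positivity) hr.lt.le

section WeakType

variable {α : Type*} [MeasurableSpace α] {μ : Measure α} {h : α → ℝ} {p q C : ℝ}

lemma setLIntegral_meas_lt_mul_rpow_lt_top {s : Set ℝ} {c : ℝ} (hs : MeasurableSet s)
    (hs₀ : s ⊆ Ioi 0) (hint : IntegrableOn (fun t ↦ t ^ (q - 1 - c)) s)
    (hbound : ∀ t ∈ s, μ {x | t < h x} ≤ ENNReal.ofReal (C * t ^ (-c))) :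
    ∫⁻ t in s, μ {x | t < h x} * ENNReal.ofReal (t ^ (q - 1)) < ⊤ := by
  calc ∫⁻ t in s, μ {x | t < h x} * ENNReal.ofReal (t ^ (q - 1))
      ≤ ∫⁻ t in s, ENNReal.ofReal (C * t ^ (q - 1 - c)) := by
        refine setLIntegral_mono' hs fun t ht ↦ ?_
        have ht₀ : 0 < t := hs₀ ht
        rw [show q - 1 - c = -c + (q - 1) by ring, Real.rpow_add ht₀, ← mul_assoc,
          ENNReal.ofReal_mul' (Real.rpow_nonneg ht₀.le _)]
        gcongr
        exact hbound t ht
    _ < ⊤ := (hint.const_mul C).lintegral_lt_top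

lemma lintegral_rpow_lt_top_of_meas_lt_le {a b : ℝ} (hh : Measurable h) (hh₀ : ∀ x, 0 ≤ h x)
    (hq : 0 < q) (haq : a < q) (hqb : q < b)
    (hsmall : ∀ t ∈ Ioc 0 1, μ {x | t < h x} ≤ ENNReal.ofReal (C * t ^ (-a)))
    (hlarge : ∀ t ∈ Ioi 1, μ {x | t < h x} ≤ ENNReal.ofReal (C * t ^ (-b))) :
    ∫⁻ x, ENNReal.ofReal (h x ^ q) ∂μ < ⊤ := by
  rw [lintegral_rpow_eq_lintegral_meas_lt_mul μ (ae_of_all _ hh₀) hh.aemeasurable hq,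
    ← Ioc_union_Ioi_eq_Ioi zero_le_one]
  refine ENNReal.mul_lt_top ENNReal.ofReal_lt_top <| (lintegral_union_le _ _ _).trans_lt <|
    ENNReal.add_lt_top.2 ⟨?_, ?_⟩
  · refine setLIntegral_meas_lt_mul_rpow_lt_top measurableSet_Ioc (fun t ht ↦ ht.1) ?_ hsmall
    exact (intervalIntegrable_iff_integrableOn_Ioc_of_le zero_le_one).1
      (intervalIntegral.intervalIntegrable_rpow' (by linarith))
  · refine setLIntegral_meas_lt_mul_rpow_lt_top measurableSet_Ioi
      (Ioi_subset_Ioi zero_le_one) ?_ hlarge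
    exact integrableOn_Ioi_rpow_of_lt (by linarith) zero_lt_one

lemma div_rpow_eq_mul_rpow_neg {t : ℝ} (ht : 0 < t) (C p : ℝ) : C / t ^ p = C * t ^ (-p) := by
  rw [Real.rpow_neg ht.le, div_eq_mul_inv]

variable (hh : Measurable h) (hh₀ : ∀ x, 0 ≤ h x)
  (hweak : ∀ σ > 0, μ {x | σ < h x} ≤ ENNReal.ofReal (C / σ ^ p))
include hh hh₀ hweak

lemma lintegral_rpow_setOf_le_one_lt_top (hp : 0 < p) (hpq : p < q) :
    ∫⁻ x in {x | h x ≤ 1}, ENNReal.ofReal (h x ^ q) ∂μ < ⊤ := by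
  refine lintegral_rpow_lt_top_of_meas_lt_le (C := C) (b := q + 1) hh hh₀ (hp.trans hpq) hpq
    (lt_add_one q) (fun t ht ↦ ?_) (fun t ht ↦ ?_)
  · rw [← div_rpow_eq_mul_rpow_neg ht.1]
    exact (Measure.restrict_le_self _).trans (hweak t ht.1)
  · have hempty : {x | t < h x} ∩ {x | h x ≤ 1} = ∅ :=
      eq_empty_of_forall_notMem fun x hx ↦ ((mem_Ioi.1 ht).trans hx.1).not_ge hx.2
    simp [Measure.restrict_apply (measurableSet_lt measurable_const hh), hempty]

lemma lintegral_rpow_setOf_one_lt_lt_top (hq : 0 < q) (hqp : q < p) :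
    ∫⁻ x in {x | 1 < h x}, ENNReal.ofReal (h x ^ q) ∂μ < ⊤ := by
  refine lintegral_rpow_lt_top_of_meas_lt_le (C := C) (a := 0) hh hh₀ hq hq hqp
    (fun t ht ↦ ?_) (fun t ht ↦ ?_)
  · calc μ.restrict {x | 1 < h x} {x | t < h x} ≤ μ {x | 1 < h x} :=
          (measure_mono (subset_univ _)).trans_eq (Measure.restrict_apply_univ _)
      _ ≤ ENNReal.ofReal (C / 1 ^ p) := hweak 1 one_pos
      _ = ENNReal.ofReal (C * t ^ (-0 : ℝ)) := by simp
  · rw [← div_rpow_eq_mul_rpow_neg (zero_lt_one.trans ht)]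
    exact (Measure.restrict_le_self _).trans (hweak t (zero_lt_one.trans ht))

theorem lintegral_mul_lt_top_of_weakType {k : α → ℝ} {a a' b b' : ℝ} (hk₀ : ∀ x, 0 ≤ k x)
    (ha : a.HolderConjugate a') (hb : b.HolderConjugate b') (hap : a < p) (hpb : p < b)
    (hka : ∫⁻ x, ENNReal.ofReal (k x ^ a') ∂μ < ⊤)
    (hkb : ∫⁻ x, ENNReal.ofReal (k x ^ b') ∂μ < ⊤) :
    ∫⁻ x, ENNReal.ofReal (k x * h x) ∂μ < ⊤ := by
  have young : ∀ {r r' : ℝ} (s : Set α), r.HolderConjugate r' →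
      ∫⁻ x in s, ENNReal.ofReal (k x * h x) ∂μ ≤
        ∫⁻ x, ENNReal.ofReal (k x ^ r') ∂μ + ∫⁻ x in s, ENNReal.ofReal (h x ^ r) ∂μ := by
    intro r r' s hr
    calc ∫⁻ x in s, ENNReal.ofReal (k x * h x) ∂μ
        ≤ ∫⁻ x in s, ENNReal.ofReal (k x ^ r') + ENNReal.ofReal (h x ^ r) ∂μ :=
          lintegral_mono fun x ↦ (ENNReal.ofReal_le_ofReal
            (mul_le_rpow_add_rpow (hk₀ x) (hh₀ x) hr)).trans ENNReal.ofReal_add_le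
      _ = ∫⁻ x in s, ENNReal.ofReal (k x ^ r') ∂μ + ∫⁻ x in s, ENNReal.ofReal (h x ^ r) ∂μ :=
          lintegral_add_right _ (hh.pow_const r).ennreal_ofReal
      _ ≤ _ := by gcongr; exact Measure.restrict_le_self
  have hcompl : {x | 1 < h x}ᶜ = {x | h x ≤ 1} := by ext x; simp
  rw [← lintegral_add_compl _ (measurableSet_lt measurable_const hh), hcompl]
  exact ENNReal.add_lt_top.2
    ⟨(young _ ha).trans_lt <| ENNReal.add_lt_top.2
        ⟨hka, lintegral_rpow_setOf_one_lt_lt_top hh hh₀ hweak ha.pos hap⟩,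
      (young _ hb).trans_lt <| ENNReal.add_lt_top.2
        ⟨hkb, lintegral_rpow_setOf_le_one_lt_top hh hh₀ hweak (ha.pos.trans hap) hpb⟩⟩

end WeakType

lemma en_nonneg (x : V3) : 0 ≤ en x := Real.sqrt_nonneg _

lemma continuous_en : Continuous en := by
  unfold en nsq
  fun_prop

lemma norm_le_en (x : V3) : ‖x‖ ≤ en x := by
  refine (pi_norm_le_iff_of_nonneg (en_nonneg x)).2 fun i ↦ ?_
  rw [Real.norm_eq_abs, ← Real.sqrt_sq_eq_abs]
  exact Real.sqrt_le_sqrt <|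
    Finset.single_le_sum (f := fun j ↦ x j ^ 2) (fun j _ ↦ sq_nonneg _) (Finset.mem_univ i)

lemma lintegral_rpow_decay_lt_top (x₀ : V3) {C₀ r : ℝ} {m : ℕ} (hC₀ : 0 ≤ C₀) (hmr : 3 < m * r) :
    ∫⁻ y, ENNReal.ofReal ((C₀ / (1 + en (x₀ - y)) ^ m) ^ r) < ⊤ := by
  have hint : Integrable fun y : V3 ↦ C₀ ^ r * (1 + ‖x₀ - y‖) ^ (-(m * r)) :=
    ((integrable_one_add_norm (by simpa using hmr)).comp_sub_left x₀).const_mul _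
  refine lt_of_le_of_lt (lintegral_mono fun y ↦ ENNReal.ofReal_le_ofReal ?_) hint.lintegral_lt_top
  have hpos : 0 < 1 + ‖x₀ - y‖ := by positivity
  have hle : 1 + ‖x₀ - y‖ ≤ 1 + en (x₀ - y) := by gcongr; exact norm_le_en _
  calc (C₀ / (1 + en (x₀ - y)) ^ m) ^ r = C₀ ^ r * (1 + en (x₀ - y)) ^ (-(m * r)) := by
        rw [Real.div_rpow hC₀ (pow_nonneg (hpos.le.trans hle) _), ← Real.rpow_natCast,
          ← Real.rpow_mul (hpos.le.trans hle), Real.rpow_neg (hpos.le.trans hle), div_eq_mul_inv]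
    _ ≤ C₀ ^ r * (1 + ‖x₀ - y‖) ^ (-(m * r)) :=
        mul_le_mul_of_nonneg_left (Real.rpow_le_rpow_of_nonpos hpos hle (by linarith))
          (Real.rpow_nonneg hC₀ r)

theorem rdss_pairing_cubic_decay_general
    (Ω : Set V3) (hΩ : Ω = univ ∨ Ω = halfSpace)
    (f : V3 → V3) (hf : Measurable f)
    (hweakL3 : ∃ C : ℝ, ∀ σ : ℝ, 0 < σ →
      volume {x : V3 | x ∈ Ω ∧ σ < en (f x)} ≤ ENNReal.ofReal (C / σ ^ 3))
    (x₀ : V3) (C₀ : ℝ) (hC₀ : 0 < C₀)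
    (g : V3 → ℝ)
    (hgbound : ∀ᵐ y : V3 ∂volume, y ∈ Ω → |g y| ≤ C₀ / (1 + en (x₀ - y)) ^ 3) :
    ∫⁻ y in Ω, ENNReal.ofReal (|g y| * en (f y)) < ⊤ := by
  obtain ⟨C, hweak⟩ := hweakL3
  have hΩm : MeasurableSet Ω := by
    rcases hΩ with rfl | rfl
    exacts [MeasurableSet.univ, measurableSet_lt measurable_const (measurable_pi_apply 2)]
  have hh : Measurable fun y ↦ en (f y) := continuous_en.measurable.comp hf
  have hk₀ : ∀ y, 0 ≤ C₀ / (1 + en (x₀ - y)) ^ 3 := fun y ↦ by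
    have := en_nonneg (x₀ - y)
    positivity
  have hweakΩ : ∀ σ > 0, volume.restrict Ω {y | σ < en (f y)} ≤
      ENNReal.ofReal (C / σ ^ (3 : ℝ)) := by
    intro σ hσ
    rw [Measure.restrict_apply (measurableSet_lt measurable_const hh), Real.rpow_ofNat]
    refine (measure_mono fun y hy ↦ ?_).trans (hweak σ hσ)
    exact ⟨hy.2, hy.1⟩
  have hkernel : ∀ r : ℝ, 1 < r →
      ∫⁻ y in Ω, ENNReal.ofReal ((C₀ / (1 + en (x₀ - y)) ^ 3) ^ r) < ⊤ := fun r hr ↦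
    (setLIntegral_le_lintegral _ _).trans_lt
      (lintegral_rpow_decay_lt_top x₀ hC₀.le (by push_cast; linarith))
  calc ∫⁻ y in Ω, ENNReal.ofReal (|g y| * en (f y))
      ≤ ∫⁻ y in Ω, ENNReal.ofReal (C₀ / (1 + en (x₀ - y)) ^ 3 * en (f y)) := by
        refine lintegral_mono_ae ?_
        filter_upwards [ae_restrict_mem hΩm, ae_restrict_of_ae hgbound] with y hy hgy
        gcongr
        · exact en_nonneg _
        · exact hgy hy
    _ < ⊤ := lintegral_mul_lt_top_of_weakType hh (fun y ↦ en_nonneg _) hweakΩ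
        hk₀ (a := 2) (a' := 2) (b := 4) (b' := 4 / 3)
        (by rw [Real.holderConjugate_iff]; norm_num) (by rw [Real.holderConjugate_iff]; norm_num)
        (by norm_num) (by norm_num) (hkernel 2 (by norm_num)) (hkernel _ (by norm_num))

/-- The core estimate in the proof of Lemma 3.3: an RDSS field in weak L³(Ω) pairs
absolutely against any kernel with cubic decay `|g(y)| ≤ C₀ (1+|x₀−y|)^{−3}`. -/
theorem rdss_pairing_cubic_decay
    (Ω : Set V3) (hΩ : Ω = univ ∨ Ω = halfSpace)
    (lam φ : ℝ) (hlam : 1 < lam)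
    (f : V3 → V3) (hf : Measurable f)
    (hrdss : ∀ᵐ x : V3 ∂volume, x ∈ Ω →
      f x = lam • (rot (-φ)).mulVec (f (lam • (rot φ).mulVec x)))
    (hweakL3 : ∃ C : ℝ, ∀ σ : ℝ, 0 < σ →
      volume {x : V3 | x ∈ Ω ∧ σ < en (f x)} ≤ ENNReal.ofReal (C / σ ^ 3))
    (x₀ : V3) (C₀ : ℝ) (hC₀ : 0 < C₀)
    (g : V3 → ℝ) (hg : Measurable g)
    (hgbound : ∀ᵐ y : V3 ∂volume, y ∈ Ω → |g y| ≤ C₀ / (1 + en (x₀ - y)) ^ 3) :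
    ∫⁻ y in Ω, ENNReal.ofReal (|g y| * en (f y)) < ⊤ :=
  rdss_pairing_cubic_decay_general Ω hΩ f hf hweakL3 x₀ C₀ hC₀ g hgbound
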